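/- Let $u$ be a toric psh function of logarithmic growth on $\mathbb{C}^n$ tending to $+\infty$ at infinity, and suppose $c_\infty(u) < 1$. If a polynomial $P = \sum_J c_J z^J$ satisfies $\int_{\mathbb{C}^n \setminus \mathbb{D}_R^n} |P|^2 e^{-2u}\, dV < \infty$ for some $R$, then every monomial $z^J$ with $c_J \neq 0$ also satisfies $\int_{\mathbb{C}^n \setminus \mathbb{D}_R^n} |z^J|^2 e^{-2u}\, dV < \infty$. In other words, the multiplier space $\mathcal{P}_\infty(u)$ is monomial. -/

import Mathlib

open MeasureTheory Set Filter
open scoped ENNReal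

noncomputable section

def Psh {n : ℕ} (u : (Fin n → ℂ) → ℝ) : Prop :=
  UpperSemicontinuous u ∧ ∀ (z w : Fin n → ℂ) (r : ℝ),
    u z ≤ (2 * Real.pi)⁻¹ * ∫ θ in (0:ℝ)..(2 * Real.pi),
      u (z + ((r : ℂ) * Complex.exp ((θ : ℂ) * Complex.I)) • w)

def LogGrowth {E : Type*} [NormedAddCommGroup E] (u : E → ℝ) : Prop :=
  ∃ σ C : ℝ, ∀ z, u z ≤ σ * Real.log (max ‖z‖ 1) + C

def Exhaustive {E : Type*} [NormedAddCommGroup E] (u : E → ℝ) : Prop :=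
  Tendsto u (Bornology.cobounded E) atTop

def Toric {n : ℕ} (u : (Fin n → ℂ) → ℝ) : Prop :=
  ∀ z w : Fin n → ℂ, (∀ i, ‖z i‖ = ‖w i‖) → u z = u w

def lctInfty {E : Type*} [NormedAddCommGroup E] [MeasureSpace E] (u : E → ℝ) : ℝ≥0∞ :=
  sInf (ENNReal.ofReal '' {c : ℝ | 0 < c ∧ ∃ R : ℝ,
    IntegrableOn (fun z => Real.exp (-(2 * c * u z))) {z | R < ‖z‖} volume})

/-!
Twisting the variables by `N`-th roots of unity, with `N` larger than every partial degree of
`P`, and averaging isolates a single monomial: for `ζ` a primitive `N`-th root of unity,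
`N ^ n · c_J z^J = ∑_k ζ^(-⟨J, k⟩) P(ζ^k z)`. By Cauchy–Schwarz, `|c_J z^J|²` is then dominated
by `∑_k |P(ζ^k z)|²`. Each twist `z ↦ ζ^k z` preserves Lebesgue measure, the sup norm and the
toric weight `e^{-2u}`, so every summand is integrable on `{R ≤ ‖z‖}` as soon as `|P|² e^{-2u}`
is. This is the discrete counterpart of the orthogonality of monomials for toric weights.
-/

theorem IsPrimitiveRoot.sum_pow_mul_inv_pow {K : Type*} [Field K] {ζ : K} {N : ℕ}
    (hζ : IsPrimitiveRoot ζ N) {m j : ℕ} (hm : m < N) (hj : j < N) :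
    ∑ t : Fin N, (ζ ^ m * ζ⁻¹ ^ j) ^ (t : ℕ) = if m = j then (N : K) else 0 := by
  have hζ0 : ζ ≠ 0 := hζ.ne_zero (by omega)
  rw [Fin.sum_univ_eq_sum_range (fun t => (ζ ^ m * ζ⁻¹ ^ j) ^ t)]
  split_ifs with hmj
  · simp [hmj, hζ0]
  · have hne : ζ ^ m * ζ⁻¹ ^ j ≠ 1 := by
      rw [inv_pow, Ne, mul_inv_eq_one₀ (pow_ne_zero _ hζ0)]
      exact fun h => hmj (hζ.pow_inj hm hj h)
    have hpow : (ζ ^ m * ζ⁻¹ ^ j) ^ N = 1 := by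
      rw [mul_pow, pow_right_comm, pow_right_comm ζ⁻¹, inv_pow, hζ.pow_eq_one]
      simp
    rw [geom_sum_eq hne, hpow, sub_self, zero_div]

namespace MvPolynomial

variable {σ : Type*} [Fintype σ] [DecidableEq σ]

theorem sum_twist_eval_eq_coeff_mul_prod {K : Type*} [Field K] {ζ : K} {N : ℕ}
    (hζ : IsPrimitiveRoot ζ N) (P : MvPolynomial σ K) (hP : ∀ i, P.degreeOf i < N)
    {J : σ →₀ ℕ} (hJ : ∀ i, J i < N) (z : σ → K) :
    ∑ k : σ → Fin N, (∏ i, (ζ⁻¹ ^ J i) ^ (k i : ℕ)) * eval (fun i => ζ ^ (k i : ℕ) * z i) P =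
      N ^ Fintype.card σ * (coeff J P * ∏ i, z i ^ J i) := by
  have hM : ∀ M ∈ P.support, ∀ i, M i < N := fun M hM i =>
    (monomial_le_degreeOf i hM).trans_lt (hP i)
  have hterm : ∀ M ∈ P.support, ∑ k : σ → Fin N,
      (∏ i, (ζ⁻¹ ^ J i) ^ (k i : ℕ)) * (coeff M P * ∏ i, (ζ ^ (k i : ℕ) * z i) ^ M i) =
        coeff M P * if M = J then N ^ Fintype.card σ * ∏ i, z i ^ J i else 0 := by
    intro M hM'
    calc _ = coeff M P * ∏ i, ∑ t : Fin N, (ζ ^ M i * ζ⁻¹ ^ J i) ^ (t : ℕ) * z i ^ M i := by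
          rw [Fintype.prod_sum, Finset.mul_sum]
          refine Finset.sum_congr rfl fun k _ => ?_
          rw [mul_left_comm, ← Finset.prod_mul_distrib]
          congr 1
          refine Finset.prod_congr rfl fun i _ => ?_
          ring
      _ = coeff M P * ∏ i, (if M i = J i then (N : K) else 0) * z i ^ M i := by
          simp_rw [← Finset.sum_mul, hζ.sum_pow_mul_inv_pow (hM M hM' _) (hJ _)]
      _ = _ := by
          simp_rw [ite_mul, zero_mul, Fintype.prod_ite_zero, ← DFunLike.ext_iff]
          split_ifs with h
          · subst h
            rw [Finset.prod_mul_distrib, Finset.prod_const, Finset.card_univ]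
          · rfl
  simp_rw [eval_eq', Finset.mul_sum]
  rw [Finset.sum_comm, Finset.sum_congr rfl hterm, Finset.sum_eq_single J]
  · simp only [if_true]
    ring
  · intro M _ hMJ
    simp [hMJ]
  · intro hJ'
    simp [notMem_support_iff.1 hJ']

theorem card_pow_mul_norm_coeff_mul_prod_sq_le {ζ : ℂ} {N : ℕ} (hζ : IsPrimitiveRoot ζ N)
    (P : MvPolynomial σ ℂ) (hP : ∀ i, P.degreeOf i < N) {J : σ →₀ ℕ} (hJ : ∀ i, J i < N)
    (z : σ → ℂ) :
    (N : ℝ) ^ Fintype.card σ * ‖coeff J P * ∏ i, z i ^ J i‖ ^ 2 ≤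
      ∑ k : σ → Fin N, ‖eval (fun i => ζ ^ (k i : ℕ) * z i) P‖ ^ 2 := by
  set A : ℝ := (N : ℝ) ^ Fintype.card σ
  set a : (σ → Fin N) → ℝ := fun k => ‖eval (fun i => ζ ^ (k i : ℕ) * z i) P‖
  have htwist (k : σ → Fin N) : ‖∏ i, (ζ⁻¹ ^ J i) ^ (k i : ℕ)‖ = 1 := by
    refine (norm_prod _ _).trans (Finset.prod_eq_one fun i _ => ?_)
    rw [norm_pow, norm_pow, norm_inv, hζ.norm'_eq_one (by have := hJ i; omega)]
    simp
  have hsum : A * ‖coeff J P * ∏ i, z i ^ J i‖ ≤ ∑ k, a k := by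
    calc A * ‖coeff J P * ∏ i, z i ^ J i‖
        = ‖∑ k : σ → Fin N,
            (∏ i, (ζ⁻¹ ^ J i) ^ (k i : ℕ)) * eval (fun i => ζ ^ (k i : ℕ) * z i) P‖ := by
          rw [sum_twist_eval_eq_coeff_mul_prod hζ P hP hJ, norm_mul]
          simp [A]
      _ ≤ ∑ k, a k := (norm_sum_le _ _).trans_eq <|
          Finset.sum_congr rfl fun k _ => by rw [norm_mul, htwist, one_mul]
  have hcs : (∑ k, a k) ^ 2 ≤ A * ∑ k, a k ^ 2 := by
    simpa [A] using sq_sum_le_card_mul_sum_sq (s := Finset.univ) (f := a)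
  rcases (show 0 ≤ A by positivity).eq_or_lt with hA | hA
  · rw [← hA, zero_mul]
    positivity
  · refine le_of_mul_le_mul_left ?_ hA
    nlinarith [pow_le_pow_left₀ (by positivity) hsum 2]

end MvPolynomial

section PiRotation

variable {ι : Type*}

def piRotation (c : ι → Circle) : (ι → ℂ) ≃ᵐ (ι → ℂ) :=
  MeasurableEquiv.piCongrRight fun i => (rotation (c i)).toHomeomorph.toMeasurableEquiv

theorem piRotation_apply (c : ι → Circle) (z : ι → ℂ) :
    piRotation c z = fun i => c i * z i := rfl

theorem measurePreserving_piRotation [Fintype ι] (c : ι → Circle) :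
    MeasurePreserving (piRotation c) :=
  volume_preserving_pi fun i => (rotation (c i)).measurePreserving

theorem nnnorm_piRotation_apply (c : ι → Circle) (z : ι → ℂ) (i : ι) :
    ‖piRotation c z i‖₊ = ‖z i‖₊ := by
  simp [piRotation_apply, nnnorm_mul, ← NNReal.coe_inj, Circle.norm_coe]

theorem norm_piRotation [Fintype ι] (c : ι → Circle) (z : ι → ℂ) : ‖piRotation c z‖ = ‖z‖ := by
  simp only [Pi.norm_def, nnnorm_piRotation_apply]

theorem MeasureTheory.IntegrableOn.comp_piRotation [Fintype ι] {E : Type*}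
    [NormedAddCommGroup E] {g : (ι → ℂ) → E} {R : ℝ} (hg : IntegrableOn g {z | R ≤ ‖z‖})
    (c : ι → Circle) :
    IntegrableOn (g ∘ piRotation c) {z | R ≤ ‖z‖} := by
  have hpre : piRotation c ⁻¹' {z | R ≤ ‖z‖} = {z | R ≤ ‖z‖} := by
    ext z
    simp [norm_piRotation]
  rw [← hpre]
  exact ((measurePreserving_piRotation c).integrableOn_comp_preimage
    (piRotation c).measurableEmbedding).2 hg

end PiRotation

theorem Toric.apply_piRotation {n : ℕ} {u : (Fin n → ℂ) → ℝ} (htor : Toric u)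
    (c : Fin n → Circle) (z : Fin n → ℂ) : u (piRotation c z) = u z :=
  htor _ _ fun i => congrArg NNReal.toReal (nnnorm_piRotation_apply c z i)

theorem Toric.integrableOn_comp_piRotation_mul_exp {n : ℕ} {u : (Fin n → ℂ) → ℝ}
    (htor : Toric u) {g : (Fin n → ℂ) → ℝ} {R : ℝ}
    (hg : IntegrableOn (fun z => g z * Real.exp (-(2 * u z))) {z | R ≤ ‖z‖})
    (c : Fin n → Circle) :
    IntegrableOn (fun z => g (piRotation c z) * Real.exp (-(2 * u z))) {z | R ≤ ‖z‖} := by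
  refine (hg.comp_piRotation c).congr_fun (fun z _ => ?_)
    (measurableSet_le measurable_const measurable_norm)
  rw [Function.comp_apply, htor.apply_piRotation]

theorem stmt17_general {n : ℕ} (u : (Fin n → ℂ) → ℝ) (hu : Psh u) (htor : Toric u)
    (P : MvPolynomial (Fin n) ℂ) (R : ℝ)
    (hint : IntegrableOn
      (fun z : Fin n → ℂ => ‖MvPolynomial.eval z P‖ ^ 2 * Real.exp (-(2 * u z)))
      {z | R ≤ ‖z‖} volume) :
    ∀ J : Fin n →₀ ℕ, MvPolynomial.coeff J P ≠ 0 →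
      IntegrableOn
        (fun z : Fin n → ℂ => ‖∏ i, z i ^ J i‖ ^ 2 * Real.exp (-(2 * u z)))
        {z | R ≤ ‖z‖} volume := by
  intro J hJ
  set N := P.totalDegree + 1
  set ζ : Circle := Circle.exp (2 * Real.pi / N)
  have hζ : IsPrimitiveRoot (ζ : ℂ) N := by
    convert Complex.isPrimitiveRoot_exp N (Nat.succ_ne_zero _) using 1
    push_cast [ζ, Circle.coe_exp]
    ring_nf
  have hP (i : Fin n) : P.degreeOf i < N := Nat.lt_succ_of_le (P.degreeOf_le_totalDegree i)
  have hJN (i : Fin n) : J i < N :=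
    (MvPolynomial.monomial_le_degreeOf i (MvPolynomial.mem_support_iff.2 hJ)).trans_lt (hP i)
  have htwisted (k : Fin n → Fin N) : IntegrableOn (fun z =>
      ‖MvPolynomial.eval (fun i => (ζ : ℂ) ^ (k i : ℕ) * z i) P‖ ^ 2 * Real.exp (-(2 * u z)))
      {z | R ≤ ‖z‖} :=
    htor.integrableOn_comp_piRotation_mul_exp hint fun i => ζ ^ (k i : ℕ)
  have hmeas : Measurable fun z : Fin n → ℂ => ‖∏ i, z i ^ J i‖ ^ 2 * Real.exp (-(2 * u z)) := by
    have := hu.1.measurable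
    fun_prop
  refine ((integrable_finsetSum Finset.univ fun k _ => htwisted k).const_mul
    (‖P.coeff J‖ ^ 2)⁻¹).mono' hmeas.aestronglyMeasurable.restrict (ae_of_all _ fun z => ?_)
  have hcs := MvPolynomial.card_pow_mul_norm_coeff_mul_prod_sq_le hζ P hP hJN z
  rw [Fintype.card_fin] at hcs
  have hpow : (1 : ℝ) ≤ (N : ℝ) ^ n := one_le_pow₀ (by simp [N])
  rw [Real.norm_of_nonneg (by positivity), ← Finset.sum_mul, ← mul_assoc]
  refine mul_le_mul_of_nonneg_right ?_ (Real.exp_nonneg _)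
  rw [le_inv_mul_iff₀ (pow_pos (norm_pos_iff.2 hJ) 2), ← mul_pow, ← norm_mul]
  exact (le_mul_of_one_le_left (by positivity) hpow).trans hcs

/-- for a toric `u ∈ L*(ℂⁿ)` with `c∞(u) < 1`, if a polynomial
`P = ∑ c_J z^J` satisfies `∫_{ℂⁿ∖𝔻_Rⁿ} |P|² e^{-2u} dV < ∞`, then each monomial `z^J`
with `c_J ≠ 0` satisfies the same integrability; i.e. `𝒫∞(u)` is monomial.
(On `Fin n → ℂ` with the sup norm, `ℂⁿ∖𝔻_Rⁿ = {z | R ≤ ‖z‖}`.) -/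
theorem stmt17 {n : ℕ} (u : (Fin n → ℂ) → ℝ) (hu : Psh u) (htor : Toric u)
    (hlg : LogGrowth u) (hex : Exhaustive u) (hlct : lctInfty u < 1)
    (P : MvPolynomial (Fin n) ℂ) (R : ℝ)
    (hint : IntegrableOn
      (fun z : Fin n → ℂ => ‖MvPolynomial.eval z P‖ ^ 2 * Real.exp (-(2 * u z)))
      {z | R ≤ ‖z‖} volume) :
    ∀ J : Fin n →₀ ℕ, MvPolynomial.coeff J P ≠ 0 →
      IntegrableOn
        (fun z : Fin n → ℂ => ‖∏ i, z i ^ J i‖ ^ 2 * Real.exp (-(2 * u z)))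
        {z | R ≤ ‖z‖} volume :=
  stmt17_general u hu htor P R hint
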